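/- Let φ be the substitution on {0,1} with φ(0) = 1, φ(1) = 100, u_n = φ^n(1), v_0 = 00 and v_n = u_{n−1}u_{n−1} for n ≥ 1. For every n ∈ ℕ, the infinite word u_n \overline{v_n} (the word u_n followed by the periodic repetition of v_n) is an alternate Lyndon word. -/

import Mathlib

open Filter Topology

/-- Alternate (Ito–Sadahiro) strict order on infinite sequences (0-indexed: entry `i`
is the `(i+1)`-th letter `x_{i+1}` of the paper). `altLt x y` iff at the first index
where they differ the comparison alternates with the parity of the index:
`(-1)^k (x_k - y_k) < 0` in 1-based indexing. -/
def altLt (x y : ℕ → ℕ) : Prop :=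
  ∃ k : ℕ, (∀ i < k, x i = y i) ∧ (if Even k then y k < x k else x k < y k)

def altLe (x y : ℕ → ℕ) : Prop := x = y ∨ altLt x y

def shiftSeq (x : ℕ → ℕ) (k : ℕ) : ℕ → ℕ := fun i => x (k + i)

/-- An alternate Lyndon word: smaller (in the alternate order) than all of its shifts. -/
def IsAltLyndon (d : ℕ → ℕ) : Prop := ∀ k : ℕ, altLe d (shiftSeq d k)

/-- The Lyndon system associated to `d`: sequences over the alphabet `{0, …, d_1}`
all of whose shifts dominate `d` in the alternate order. -/
def LyndonSystem (d : ℕ → ℕ) : Set (ℕ → ℕ) :=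
  {x | (∀ i, x i ≤ d 0) ∧ ∀ k : ℕ, altLe d (shiftSeq x k)}

def IsFactorOf (w : List ℕ) (x : ℕ → ℕ) : Prop :=
  ∃ k : ℕ, w = (List.range w.length).map (fun i => x (k + i))

/-- The language of the Lyndon system: finite factors of its elements. -/
def LyndonLang (d : ℕ → ℕ) : Set (List ℕ) :=
  {w | ∃ x ∈ LyndonSystem d, IsFactorOf w x}

/-- `Hword d n` is the number of words of length `n` in the language `L_M`. -/
noncomputable def Hword (d : ℕ → ℕ) (n : ℕ) : ℕ :=
  Set.ncard {w : List ℕ | w ∈ LyndonLang d ∧ w.length = n}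

/-- The topological entropy of the Lyndon system of `d` equals `h`,
i.e. `lim_{n→∞} (log H_n)/n = h`. -/
def EntropyIs (d : ℕ → ℕ) (h : ℝ) : Prop :=
  Filter.Tendsto (fun n : ℕ => Real.log (Hword d n) / n) Filter.atTop (nhds h)

/-- The substitution `φ` on letters: `φ(0) = 1`, `φ(1) = 100`. -/
def phiL (a : ℕ) : List ℕ := if a = 0 then [1] else [1, 0, 0]
/-- `φ` extended to words. -/
def phiW (w : List ℕ) : List ℕ := w.flatMap phiL
/-- `uW n = φ^n(1)`. -/
def uW (n : ℕ) : List ℕ := phiW^[n] [1]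
/-- The infinite fixed point `φ^∞(1)` (each `uW n` is a prefix of `uW (n+1)`,
and `|uW (i+1)| > i`, so the definition below gives the limit word). -/
def phiInf : ℕ → ℕ := fun i => (uW (i + 1)).getD i 0

/-- The periodic infinite word `\overline{w}` associated to a finite word `w`. -/
def periodicSeq (w : List ℕ) : ℕ → ℕ := fun i => w.getD (i % w.length) 0
/-- The infinite word `p \overline{w}`: the finite word `p` followed by the
periodic repetition of `w`. -/
def prefixPeriodic (p w : List ℕ) : ℕ → ℕ :=
  fun i => if i < p.length then p.getD i 0 else w.getD ((i - p.length) % w.length) 0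

/-- `vW 0 = 00`, `vW n = u_{n-1} u_{n-1}` for `n ≥ 1`. -/
def vW : ℕ → List ℕ
  | 0 => [0, 0]
  | n + 1 => uW n ++ uW n

/-!
Since `φ(0) = 1` and `φ(1) = 100` have odd length, the block `φ(x_k)` of `φ(x)` starts at a
position of the same parity as `k`. If `x` and `z` first differ at `k`, with `x_k = 0` and
`z_k = 1`, then `φ(x)` and `φ(z)` first differ one letter later, at a position of the other
parity, where `φ(x)` has `1` and `φ(z)` has `0`; hence `φ` is increasing for the alternate order
on binary words. A shift of `φ(x)` either starts at a block, and is then `φ` of a shift of `x`,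
or starts at a `0` inside a block `100`, and is then larger than `φ(x)`, which starts with `1`.
So `φ` preserves alternate Lyndon words, and the theorem follows by induction from
`u_0 \overline{v_0} = 1 0 0 0 ⋯`, because `φ(u_n \overline{v_n}) = u_{n+1} \overline{v_{n+1}}`.
-/

lemma altLe_of_apply_zero_lt {x y : ℕ → ℕ} (h : y 0 < x 0) : altLe x y :=
  Or.inr ⟨0, fun _ hi => absurd hi (Nat.not_lt_zero _), by rwa [if_pos Even.zero]⟩

lemma phiL_zero : phiL 0 = [1] := rfl

lemma phiL_of_ne_zero {a : ℕ} (ha : a ≠ 0) : phiL a = [1, 0, 0] := if_neg ha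

lemma odd_length_phiL (a : ℕ) : Odd (phiL a).length := by
  unfold phiL; split <;> decide

lemma length_phiL_pos (a : ℕ) : 0 < (phiL a).length := (odd_length_phiL a).pos

lemma phiL_getD_zero (a : ℕ) : (phiL a).getD 0 0 = 1 := by
  unfold phiL; split <;> rfl

lemma phiW_append (l l' : List ℕ) : phiW (l ++ l') = phiW l ++ phiW l' := List.flatMap_append

lemma phiW_singleton (a : ℕ) : phiW [a] = phiL a := by simp [phiW]

lemma phiW_ne_nil {w : List ℕ} (hw : w ≠ []) : phiW w ≠ [] := by
  obtain ⟨a, l, rfl⟩ := List.exists_cons_of_ne_nil hw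
  rw [← List.singleton_append, phiW_append, phiW_singleton]
  exact List.append_ne_nil_of_left_ne_nil (List.ne_nil_of_length_pos (length_phiL_pos a)) _

lemma le_one_of_mem_phiW {a : ℕ} {w : List ℕ} (h : a ∈ phiW w) : a ≤ 1 := by
  obtain ⟨b, -, hb⟩ := List.mem_flatMap.mp h
  unfold phiL at hb
  split at hb <;> simp at hb <;> omega

lemma phiW_flatten_replicate (W : List ℕ) (N : ℕ) :
    phiW (List.replicate N W).flatten = (List.replicate N (phiW W)).flatten := by
  induction N with
  | zero => rfl
  | succ N ih => simp only [List.replicate_succ, List.flatten_cons, phiW_append, ih]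

section PhiSeq

def seqPrefix (x : ℕ → ℕ) (n : ℕ) : List ℕ := (List.range n).map x

def blockStart (x : ℕ → ℕ) (n : ℕ) : ℕ := (phiW (seqPrefix x n)).length

/-- `φ` on infinite words: letter `i` of `φ(x)` already lies in `φ(x_0 ⋯ x_i)`, as every block
`φ(a)` is nonempty. -/
def phiSeq (x : ℕ → ℕ) (i : ℕ) : ℕ := (phiW (seqPrefix x (i + 1))).getD i 0

variable {x : ℕ → ℕ}

lemma seqPrefix_add (x : ℕ → ℕ) (m n : ℕ) :
    seqPrefix x (m + n) = seqPrefix x m ++ seqPrefix (shiftSeq x m) n := by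
  simp only [seqPrefix, List.range_add, List.map_append, List.map_map]
  rfl

lemma seqPrefix_succ (x : ℕ → ℕ) (n : ℕ) : seqPrefix x (n + 1) = seqPrefix x n ++ [x n] :=
  seqPrefix_add x n 1

lemma phiW_seqPrefix_add (x : ℕ → ℕ) (m n : ℕ) :
    phiW (seqPrefix x (m + n)) = phiW (seqPrefix x m) ++ phiW (seqPrefix (shiftSeq x m) n) := by
  rw [seqPrefix_add, phiW_append]

lemma blockStart_add (x : ℕ → ℕ) (m n : ℕ) :
    blockStart x (m + n) = blockStart x m + blockStart (shiftSeq x m) n := by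
  simp only [blockStart, phiW_seqPrefix_add, List.length_append]

lemma blockStart_succ (x : ℕ → ℕ) (n : ℕ) :
    blockStart x (n + 1) = blockStart x n + (phiL (x n)).length := by
  simp only [blockStart, seqPrefix_succ, phiW_append, phiW_singleton, List.length_append]

lemma blockStart_lt_succ (x : ℕ → ℕ) (n : ℕ) : blockStart x n < blockStart x (n + 1) := by
  rw [blockStart_succ]
  exact Nat.lt_add_of_pos_right (length_phiL_pos _)

lemma le_blockStart (x : ℕ → ℕ) (n : ℕ) : n ≤ blockStart x n := by
  induction n with
  | zero => exact Nat.zero_le _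
  | succ n ih => exact ih.trans_lt (blockStart_lt_succ x n)

lemma even_blockStart_iff (x : ℕ → ℕ) (n : ℕ) : Even (blockStart x n) ↔ Even n := by
  induction n with
  | zero => simp [blockStart, seqPrefix, phiW]
  | succ n ih =>
    rw [blockStart_succ, Nat.even_add, ih, Nat.even_add_one,
      iff_false_intro (Nat.not_even_iff_odd.mpr (odd_length_phiL (x n)))]
    tauto

lemma exists_blockStart_le_lt (x : ℕ → ℕ) (m : ℕ) :
    ∃ j, blockStart x j ≤ m ∧ m < blockStart x (j + 1) := by
  induction m with
  | zero => exact ⟨0, Nat.zero_le _, blockStart_lt_succ x 0⟩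
  | succ m ih =>
    obtain ⟨j, hj, hm⟩ := ih
    by_cases h : m + 1 < blockStart x (j + 1)
    · exact ⟨j, by omega, h⟩
    · exact ⟨j + 1, by omega, by have := blockStart_lt_succ x (j + 1); omega⟩

lemma phiSeq_eq_getD {n m : ℕ} (hm : m < blockStart x n) :
    phiSeq x m = (phiW (seqPrefix x n)).getD m 0 := by
  have restrict : ∀ {a b}, a ≤ b → m < blockStart x a →
      (phiW (seqPrefix x b)).getD m 0 = (phiW (seqPrefix x a)).getD m 0 := by
    intro a b hab hma
    obtain ⟨c, rfl⟩ := Nat.exists_eq_add_of_le hab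
    rw [phiW_seqPrefix_add]
    exact List.getD_append _ _ _ _ hma
  rcases le_total n (m + 1) with h | h
  · exact restrict h hm
  · exact (restrict h ((Nat.lt_succ_self m).trans_le (le_blockStart x _))).symm

lemma phiSeq_blockStart_add {j t : ℕ} (ht : t < (phiL (x j)).length) :
    phiSeq x (blockStart x j + t) = (phiL (x j)).getD t 0 := by
  rw [phiSeq_eq_getD (n := j + 1) (by rw [blockStart_succ]; omega), seqPrefix_succ, phiW_append,
    phiW_singleton, List.getD_append_right _ _ _ (blockStart x j + t) (Nat.le_add_right _ _)]
  simp only [blockStart, Nat.add_sub_cancel_left]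

lemma phiSeq_blockStart (x : ℕ → ℕ) (j : ℕ) : phiSeq x (blockStart x j) = 1 := by
  have h := phiSeq_blockStart_add (x := x) (length_phiL_pos (x j))
  rwa [Nat.add_zero, phiL_getD_zero] at h

lemma phiSeq_zero (x : ℕ → ℕ) : phiSeq x 0 = 1 := phiSeq_blockStart x 0

lemma phiSeq_eq_zero_of_lt_of_lt {j m : ℕ} (h₁ : blockStart x j < m)
    (h₂ : m < blockStart x (j + 1)) : phiSeq x m = 0 := by
  have hxj : x j ≠ 0 := by
    intro h0
    rw [blockStart_succ, h0, phiL_zero] at h₂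
    simp only [List.length_singleton] at h₂
    omega
  rw [blockStart_succ, phiL_of_ne_zero hxj] at h₂
  have hm := phiSeq_blockStart_add (x := x) (j := j) (t := m - blockStart x j)
  rw [phiL_of_ne_zero hxj, Nat.add_sub_cancel' h₁.le] at hm
  simp only [List.length_cons, List.length_nil] at h₂ hm
  obtain h | h : m - blockStart x j = 1 ∨ m - blockStart x j = 2 := by omega
  all_goals rw [hm (by omega), h]; rfl

lemma phiSeq_le_one (x : ℕ → ℕ) (i : ℕ) : phiSeq x i ≤ 1 := by
  unfold phiSeq
  rw [List.getD_eq_getElem?_getD]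
  cases h : (phiW (seqPrefix x (i + 1)))[i]? with
  | none => exact Nat.zero_le 1
  | some a => exact le_one_of_mem_phiW (List.mem_of_getElem? h)

lemma shiftSeq_phiSeq (x : ℕ → ℕ) (j : ℕ) :
    shiftSeq (phiSeq x) (blockStart x j) = phiSeq (shiftSeq x j) := by
  funext i
  have hi : i < blockStart (shiftSeq x j) (i + 1) :=
    (Nat.lt_succ_self i).trans_le (le_blockStart _ _)
  rw [shiftSeq, phiSeq_eq_getD (n := j + (i + 1)) (by rw [blockStart_add]; omega),
    phiW_seqPrefix_add, List.getD_append_right _ _ _ (blockStart x j + i) (Nat.le_add_right _ _)]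
  simp only [phiSeq, blockStart, Nat.add_sub_cancel_left]

lemma phiSeq_first_diff {z : ℕ → ℕ} {k : ℕ} (hagree : ∀ i < k, x i = z i) (hx : x k = 0)
    (hz : z k ≠ 0) :
    (∀ i < blockStart x k + 1, phiSeq x i = phiSeq z i) ∧
      phiSeq x (blockStart x k + 1) = 1 ∧ phiSeq z (blockStart x k + 1) = 0 := by
  have hpre : seqPrefix x k = seqPrefix z k :=
    List.map_congr_left fun i hi => hagree i (List.mem_range.mp hi)
  have hS : blockStart x k = blockStart z k := by rw [blockStart, blockStart, hpre]
  refine ⟨fun i hi => ?_, ?_, ?_⟩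
  · rcases (Nat.lt_succ_iff.mp hi).lt_or_eq with hi | rfl
    · rw [phiSeq_eq_getD hi, phiSeq_eq_getD (hS ▸ hi), hpre]
    · rw [phiSeq_blockStart, hS, phiSeq_blockStart]
  · have hsucc : blockStart x (k + 1) = blockStart x k + 1 := by
      rw [blockStart_succ, hx, phiL_zero, List.length_singleton]
    rw [← hsucc, phiSeq_blockStart]
  · rw [hS, phiSeq_blockStart_add (by rw [phiL_of_ne_zero hz]; decide), phiL_of_ne_zero hz]
    rfl

lemma phiSeq_altLe {z : ℕ → ℕ} (hx : ∀ i, x i ≤ 1) (hz : ∀ i, z i ≤ 1) (h : altLe x z) :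
    altLe (phiSeq x) (phiSeq z) := by
  rcases h with rfl | ⟨k, hagree, hk⟩
  · exact Or.inl rfl
  right
  split_ifs at hk with hk_even
  · obtain ⟨hagree', hz1, hx0⟩ :=
      phiSeq_first_diff (fun i hi => (hagree i hi).symm) (by have := hx k; omega : z k = 0) (by omega)
    refine ⟨blockStart z k + 1, fun i hi => (hagree' i hi).symm, ?_⟩
    rw [if_neg (by simpa [Nat.even_add_one, even_blockStart_iff] using hk_even), hx0, hz1]
    exact Nat.zero_lt_one
  · obtain ⟨hagree', hx1, hz0⟩ :=
      phiSeq_first_diff hagree (by have := hz k; omega : x k = 0) (by omega)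
    refine ⟨blockStart x k + 1, hagree', ?_⟩
    rw [if_pos (by simpa [Nat.even_add_one, even_blockStart_iff] using hk_even), hx1, hz0]
    exact Nat.zero_lt_one

theorem IsAltLyndon.phiSeq (hx : ∀ i, x i ≤ 1) (hL : IsAltLyndon x) :
    IsAltLyndon (phiSeq x) := by
  intro m
  obtain ⟨j, hj, hm⟩ := exists_blockStart_le_lt x m
  rcases hj.lt_or_eq with hlt | rfl
  · apply altLe_of_apply_zero_lt
    rw [phiSeq_zero, shiftSeq, Nat.add_zero, phiSeq_eq_zero_of_lt_of_lt hlt hm]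
    exact Nat.zero_lt_one
  · rw [shiftSeq_phiSeq]
    exact phiSeq_altLe hx (fun i => hx (j + i)) (hL j)

end PhiSeq

lemma getD_flatten_replicate {α : Type*} (W : List α) (d : α) {N i : ℕ}
    (hi : i < N * W.length) :
    (List.replicate N W).flatten.getD i d = W.getD (i % W.length) d := by
  induction N generalizing i with
  | zero => simp at hi
  | succ N ih =>
    rw [List.replicate_succ, List.flatten_cons]
    rcases Nat.lt_or_ge i W.length with h | h
    · rw [List.getD_append _ _ _ _ h, Nat.mod_eq_of_lt h]
    · rw [List.getD_append_right _ _ _ _ h, ih (by rw [Nat.succ_mul] at hi; omega),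
        Nat.mod_eq_sub_mod h]

lemma getD_append_flatten_replicate (P W : List ℕ) {N i : ℕ}
    (hi : i < P.length + N * W.length) :
    (P ++ (List.replicate N W).flatten).getD i 0 = prefixPeriodic P W i := by
  unfold prefixPeriodic
  split_ifs with h
  · exact List.getD_append _ _ _ _ h
  · rw [List.getD_append_right _ _ _ _ (not_lt.mp h), getD_flatten_replicate _ _ (by omega)]

lemma seqPrefix_prefixPeriodic (P W : List ℕ) (N : ℕ) :
    seqPrefix (prefixPeriodic P W) (P.length + N * W.length) =
      P ++ (List.replicate N W).flatten := by
  refine List.ext_getElem (by simp [seqPrefix]) fun i hi _ => ?_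
  simp only [seqPrefix, List.length_map, List.length_range] at hi
  rw [← List.getD_eq_getElem (P ++ _) 0, getD_append_flatten_replicate P W hi]
  simp [seqPrefix]

theorem phiSeq_prefixPeriodic (P W : List ℕ) (hW : W ≠ []) :
    phiSeq (prefixPeriodic P W) = prefixPeriodic (phiW P) (phiW W) := by
  funext i
  have hlen : i < P.length + (i + 1) * W.length :=
    Nat.lt_add_left _ (Nat.lt_of_lt_of_le (Nat.lt_succ_self i)
      (Nat.le_mul_of_pos_right _ (List.length_pos_iff.mpr hW)))
  have hi := hlen.trans_le (le_blockStart (prefixPeriodic P W) _)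
  rw [phiSeq_eq_getD hi]
  rw [blockStart] at hi
  rw [seqPrefix_prefixPeriodic, phiW_append, phiW_flatten_replicate] at hi ⊢
  apply getD_append_flatten_replicate
  simpa using hi

lemma phiW_uW (n : ℕ) : phiW (uW n) = uW (n + 1) :=
  (Function.iterate_succ_apply' phiW n [1]).symm

lemma phiW_vW (n : ℕ) : phiW (vW n) = vW (n + 1) := by
  cases n with
  | zero => decide
  | succ n =>
    show phiW (uW n ++ uW n) = uW (n + 1) ++ uW (n + 1)
    rw [phiW_append, phiW_uW]

lemma uW_ne_nil (n : ℕ) : uW n ≠ [] := by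
  induction n with
  | zero => exact List.cons_ne_nil _ _
  | succ n ih => rw [← phiW_uW]; exact phiW_ne_nil ih

lemma vW_ne_nil (n : ℕ) : vW n ≠ [] := by
  cases n with
  | zero => exact List.cons_ne_nil _ _
  | succ n => exact List.append_ne_nil_of_left_ne_nil (uW_ne_nil n) (uW n)

lemma prefixPeriodic_uW_vW_succ (n : ℕ) :
    prefixPeriodic (uW (n + 1)) (vW (n + 1)) = phiSeq (prefixPeriodic (uW n) (vW n)) := by
  rw [phiSeq_prefixPeriodic _ _ (vW_ne_nil n), phiW_uW, phiW_vW]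

lemma prefixPeriodic_uW_zero_vW_zero (i : ℕ) :
    prefixPeriodic (uW 0) (vW 0) i = if i = 0 then 1 else 0 := by
  rcases i with _ | i
  · rfl
  · show ([0, 0] : List ℕ).getD (i % 2) 0 = 0
    rcases Nat.mod_two_eq_zero_or_one i with h | h <;> rw [h] <;> rfl

lemma prefixPeriodic_uW_vW_le_one (n i : ℕ) : prefixPeriodic (uW n) (vW n) i ≤ 1 := by
  cases n with
  | zero => rw [prefixPeriodic_uW_zero_vW_zero]; split <;> omega
  | succ n => rw [prefixPeriodic_uW_vW_succ]; exact phiSeq_le_one _ i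

lemma isAltLyndon_prefixPeriodic_uW_zero_vW_zero : IsAltLyndon (prefixPeriodic (uW 0) (vW 0)) := by
  rintro (_ | k)
  · exact Or.inl (funext fun i => by rw [shiftSeq, Nat.zero_add])
  · apply altLe_of_apply_zero_lt
    simp [shiftSeq, prefixPeriodic_uW_zero_vW_zero]

/-- Proposition 4: for all `n`, the infinite word `u_n \overline{v_n}` is an
alternate Lyndon word. -/
theorem stmt6 (n : ℕ) : IsAltLyndon (prefixPeriodic (uW n) (vW n)) := by
  induction n with
  | zero => exact isAltLyndon_prefixPeriodic_uW_zero_vW_zero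
  | succ n ih =>
    rw [prefixPeriodic_uW_vW_succ]
    exact ih.phiSeq (prefixPeriodic_uW_vW_le_one n)
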